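/- arXiv:math/0409587 — 5 statements merged into one kernel-verified Lean document; each statement's English description precedes it below -/
import Mathlib

section
/- For all a, b ∈ SL(n,ℝ) and all u ∈ sl(n,ℝ): −½( a σ(b)⁻¹ σ(b a⁻¹ u a b⁻¹) σ(b) a⁻¹ − σ(b a⁻¹ u a b⁻¹) ) + ½ a b⁻¹ ( b σ(a)⁻¹ σ(u) σ(a) b⁻¹ − σ(u) ) b a⁻¹ = ½( σ(b a⁻¹) σ(u) σ(a b⁻¹) − a b⁻¹ σ(u) b a⁻¹ ). In particular the left-hand side depends on (a,b) only through s = a b⁻¹. (This is the computation showing that the bivector P_D^σ is projectable onto S = D/G₊ ≅ G, with projection P_S^σ(s)(ξ) = ½(Ad_{σ(s)⁻¹} − Ad_s)(σ(K⁻¹(ξ))).) -/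
/-! Since `J * J = 1`, `σ(m) = J * m * J` is multiplicative and commutes with the matrix inverse,
so `σ(b)⁻¹ σ(v) σ(b) = σ(b⁻¹ v b)`. With `v = b a⁻¹ u a b⁻¹` both conjugated terms of the
left-hand side collapse to the same matrix `a σ(a⁻¹ u a) a⁻¹` and cancel. -/

section Monoid

variable {M : Type*} [Monoid M] {J : M}

theorem conj_mul_conj_of_mul_self_eq_one (hJ : J * J = 1) (x y : M) :
    J * x * J * (J * y * J) = J * (x * y) * J := by
  calc J * x * J * (J * y * J) = J * x * (J * J) * y * J := by simp only [mul_assoc]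
    _ = J * (x * y) * J := by rw [hJ, mul_one, mul_assoc J x y]

end Monoid

namespace Matrix

variable {m α : Type*} [Fintype m] [DecidableEq m] [CommRing α] {J : Matrix m m α}

theorem inv_conj_of_mul_self_eq_one (hJ : J * J = 1) (x : Matrix m m α) :
    (J * x * J)⁻¹ = J * x⁻¹ * J := by
  rw [mul_inv_rev, mul_inv_rev, inv_eq_left_inv hJ, mul_assoc]

theorem inv_conj_mul_conj_mul_conj_of_mul_self_eq_one (hJ : J * J = 1) (x y : Matrix m m α) :
    (J * x * J)⁻¹ * (J * y * J) * (J * x * J) = J * (x⁻¹ * y * x) * J := by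
  rw [inv_conj_of_mul_self_eq_one hJ, conj_mul_conj_of_mul_self_eq_one hJ,
    conj_mul_conj_of_mul_self_eq_one hJ]

end Matrix

theorem stmt_7_general (n : ℕ)
    (J a b u : Matrix (Fin n) (Fin n) ℝ)
    (hJ : J * J = 1) (hb : b.det = 1) :
    -((2:ℝ)⁻¹) • (a * (J * b * J)⁻¹ * (J * (b * a⁻¹ * u * a * b⁻¹) * J) * (J * b * J) * a⁻¹
          - J * (b * a⁻¹ * u * a * b⁻¹) * J)
      + (2:ℝ)⁻¹ • (a * b⁻¹ * (b * (J * a * J)⁻¹ * (J * u * J) * (J * a * J) * b⁻¹ - J * u * J)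
          * (b * a⁻¹))
    = (2:ℝ)⁻¹ • (J * (b * a⁻¹) * J * (J * u * J) * (J * (a * b⁻¹) * J)
        - a * b⁻¹ * (J * u * J) * (b * a⁻¹)) := by
  have hb_unit : IsUnit b.det := by simp [hb]
  have h_first : a * (J * b * J)⁻¹ * (J * (b * a⁻¹ * u * a * b⁻¹) * J) * (J * b * J) * a⁻¹
      = a * (J * (a⁻¹ * u * a) * J) * a⁻¹ := by
    rw [mul_assoc a, mul_assoc a, Matrix.inv_conj_mul_conj_mul_conj_of_mul_self_eq_one hJ]
    simp only [mul_assoc, b.nonsing_inv_mul_cancel_left _ hb_unit]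
  have h_second : a * b⁻¹ * (b * (J * a * J)⁻¹ * (J * u * J) * (J * a * J) * b⁻¹) * (b * a⁻¹)
      = a * (J * (a⁻¹ * u * a) * J) * a⁻¹ := by
    rw [mul_assoc b, mul_assoc b, Matrix.inv_conj_mul_conj_mul_conj_of_mul_self_eq_one hJ]
    simp only [mul_assoc, b.nonsing_inv_mul_cancel_left _ hb_unit]
  have h_sigma : J * (b * a⁻¹ * u * a * b⁻¹) * J
      = J * (b * a⁻¹) * J * (J * u * J) * (J * (a * b⁻¹) * J) := by
    rw [conj_mul_conj_of_mul_self_eq_one hJ, conj_mul_conj_of_mul_self_eq_one hJ]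
    simp only [mul_assoc]
  rw [mul_sub, sub_mul, h_first, h_second, h_sigma]
  module

theorem stmt_7 (n : ℕ) (hn : 2 ≤ n)
    (J a b u : Matrix (Fin n) (Fin n) ℝ)
    (hJ : J * J = 1) (ha : a.det = 1) (hb : b.det = 1)
    (hu : u.trace = 0) :
    -((2:ℝ)⁻¹) • (a * (J * b * J)⁻¹ * (J * (b * a⁻¹ * u * a * b⁻¹) * J) * (J * b * J) * a⁻¹
          - J * (b * a⁻¹ * u * a * b⁻¹) * J)
      + (2:ℝ)⁻¹ • (a * b⁻¹ * (b * (J * a * J)⁻¹ * (J * u * J) * (J * a * J) * b⁻¹ - J * u * J)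
          * (b * a⁻¹))
    = (2:ℝ)⁻¹ • (J * (b * a⁻¹) * J * (J * u * J) * (J * (a * b⁻¹) * J)
        - a * b⁻¹ * (J * u * J) * (b * a⁻¹)) :=
  stmt_7_general n J a b u hJ hb
end

section
/- For all g, s ∈ SL(n,ℝ) and all u ∈ sl(n,ℝ): P_{g s σ(g)⁻¹}(u) = g · P_s(g⁻¹ u g) · g⁻¹. (This expresses that the bivector field P_S^σ is invariant under the twisted action (g,s) ↦ g s σ(g)⁻¹ of G₊^σ on S ≅ G.) -/
/-- The bivector P_S^σ(s) of the paper read through the trace-form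
identification: P_s(u) = ½(σ(s)⁻¹ σ(u) σ(s) − s σ(u) s⁻¹), with σ(m) = J m J. -/
noncomputable def Pbiv {n : ℕ} (J s u : Matrix (Fin n) (Fin n) ℝ) : Matrix (Fin n) (Fin n) ℝ :=
  (2:ℝ)⁻¹ • ((J * s * J)⁻¹ * (J * u * J) * (J * s * J) - s * (J * u * J) * s⁻¹)

/-!
Write `σ x = J * x * J`. Since `J * J = 1`, `σ` is a multiplicative involution commuting with
inversion, so for `t = g * s * (σ g)⁻¹` one gets `t⁻¹ = σ g * s⁻¹ * g⁻¹`,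
`σ t = σ g * σ s * g⁻¹` and `(σ t)⁻¹ = g * (σ s)⁻¹ * (σ g)⁻¹`. Substituting into both terms of
`Pbiv J t u`, the inner factors `(σ g)⁻¹ * σ u * σ g = σ (g⁻¹ * u * g)` reassemble into
`Pbiv J s (g⁻¹ * u * g)`, conjugated by `g`.
-/

namespace Matrix

variable {ι R : Type*} [Fintype ι] [DecidableEq ι] [CommRing R] {J : Matrix ι ι R}

lemma mul_mul_cancel_of_mul_self_eq_one (hJ : J * J = 1) (x : Matrix ι ι R) :
    J * (J * x) = x := by
  rw [← Matrix.mul_assoc, hJ, Matrix.one_mul]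

lemma inv_mul_mul_of_mul_self_eq_one (hJ : J * J = 1) (x : Matrix ι ι R) :
    (J * x * J)⁻¹ = J * x⁻¹ * J := by
  rw [mul_inv_rev, mul_inv_rev, inv_eq_left_inv hJ, Matrix.mul_assoc]

variable {g : Matrix ι ι R}

lemma inv_twistedConj (hJ : J * J = 1) (hg : IsUnit g.det) (s : Matrix ι ι R) :
    (g * s * (J * g * J)⁻¹)⁻¹ = J * g * J * s⁻¹ * g⁻¹ := by
  rw [inv_mul_mul_of_mul_self_eq_one hJ, mul_inv_rev, inv_mul_mul_of_mul_self_eq_one hJ,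
    nonsing_inv_nonsing_inv g hg, mul_inv_rev]
  simp only [Matrix.mul_assoc]

lemma mul_twistedConj_mul (hJ : J * J = 1) (s : Matrix ι ι R) :
    J * (g * s * (J * g * J)⁻¹) * J = J * g * J * (J * s * J) * g⁻¹ := by
  rw [inv_mul_mul_of_mul_self_eq_one hJ]
  simp only [Matrix.mul_assoc, mul_mul_cancel_of_mul_self_eq_one hJ, hJ, Matrix.mul_one]

lemma inv_mul_twistedConj_mul (hJ : J * J = 1) (hg : IsUnit g.det) (s : Matrix ι ι R) :
    (J * (g * s * (J * g * J)⁻¹) * J)⁻¹ = g * (J * s⁻¹ * J) * (J * g⁻¹ * J) := by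
  rw [mul_twistedConj_mul hJ, mul_inv_rev, mul_inv_rev, nonsing_inv_nonsing_inv g hg,
    inv_mul_mul_of_mul_self_eq_one hJ, inv_mul_mul_of_mul_self_eq_one hJ]
  simp only [Matrix.mul_assoc, mul_mul_cancel_of_mul_self_eq_one hJ]

end Matrix

theorem stmt_9_general (n : ℕ)
    (J g s u : Matrix (Fin n) (Fin n) ℝ)
    (hJ : J * J = 1) (hg : g.det = 1) :
    Pbiv J (g * s * (J * g * J)⁻¹) u = g * Pbiv J s (g⁻¹ * u * g) * g⁻¹ := by
  have hg' : IsUnit g.det := hg ▸ isUnit_one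
  rw [Pbiv, Pbiv, Matrix.inv_mul_twistedConj_mul hJ hg', Matrix.mul_twistedConj_mul hJ,
    Matrix.inv_twistedConj hJ hg', Matrix.inv_mul_mul_of_mul_self_eq_one hJ s,
    Matrix.inv_mul_mul_of_mul_self_eq_one hJ g, Matrix.mul_smul, Matrix.smul_mul]
  congr 1
  simp only [Matrix.mul_sub, Matrix.sub_mul, Matrix.mul_assoc,
    Matrix.mul_mul_cancel_of_mul_self_eq_one hJ]

theorem stmt_9 (n : ℕ) (hn : 2 ≤ n)
    (J g s u : Matrix (Fin n) (Fin n) ℝ)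
    (hJ : J * J = 1) (hg : g.det = 1) (hs : s.det = 1)
    (hu : u.trace = 0) :
    Pbiv J (g * s * (J * g * J)⁻¹) u = g * Pbiv J s (g⁻¹ * u * g) * g⁻¹ :=
  stmt_9_general n J g s u hJ hg
end

section
/- For every s ∈ SL(n,ℝ), the image of the linear map P_s : sl(n,ℝ) → sl(n,ℝ) equals { (1 − A_s)((1 + A_s)(y)) : y ∈ sl(n,ℝ) }, where A_s : sl(n,ℝ) → sl(n,ℝ) is A_s(v) = s σ(v) s⁻¹. In particular, the image of P_s is contained in { x − s σ(x) s⁻¹ : x ∈ sl(n,ℝ) }, the tangent space at s to the orbit of s under the twisted action (g,s) ↦ g s σ(g)⁻¹. -/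
theorem Submodule.map_half_symm_sub_eq_map_one_sub_mul_one_add {K V : Type*} [Field K]
    [AddCommGroup V] [Module K V] (h2 : (2 : K) ≠ 0) (A : V ≃ₗ[K] V) (W : Submodule K V)
    (hW : ∀ v, A v ∈ W ↔ v ∈ W) :
    W.map ((2 : K)⁻¹ • (A.symm.toLinearMap - A.toLinearMap)) =
      W.map ((1 - A.toLinearMap) * (1 + A.toLinearMap)) := by
  ext v
  simp only [Submodule.mem_map, LinearMap.smul_apply, LinearMap.sub_apply, Module.End.mul_apply,
    LinearMap.add_apply, Module.End.one_apply, LinearEquiv.coe_coe]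
  constructor
  · rintro ⟨u, hu, rfl⟩
    refine ⟨(2 : K)⁻¹ • A.symm u, W.smul_mem _ ((hW _).1 (by simpa using hu)), ?_⟩
    simp only [map_add, map_smul, LinearEquiv.apply_symm_apply]
    module
  · rintro ⟨y, hy, rfl⟩
    refine ⟨(2 : K) • A y, W.smul_mem _ ((hW y).2 hy), ?_⟩
    simp only [map_add, map_smul, LinearEquiv.symm_apply_apply, smul_sub, smul_smul,
      inv_mul_cancel₀ h2, one_smul]
    abel

section

variable (K : Type*) {R : Type*} [CommSemiring K] [Semiring R] [Algebra K R]

@[simps]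
def Units.conjLinearEquiv (g : Rˣ) : R ≃ₗ[K] R where
  toFun x := g * x * ↑g⁻¹
  invFun x := ↑g⁻¹ * x * g
  map_add' x y := by simp only [mul_add, add_mul]
  map_smul' c x := by simp only [mul_smul_comm, smul_mul_assoc, RingHom.id_apply]
  left_inv x := by simp [mul_assoc]
  right_inv x := by simp [mul_assoc]

end

namespace Matrix

variable {n R : Type*} [Fintype n] [DecidableEq n] [CommRing R] {J s : Matrix n n R}

noncomputable def twistUnit (hJ : J * J = 1) (hs : IsUnit s.det) : (Matrix n n R)ˣ where
  val := s * J
  inv := J * s⁻¹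
  val_inv := by
    rw [mul_assoc, ← mul_assoc J, hJ, one_mul, mul_nonsing_inv s hs]
  inv_val := by rw [mul_assoc, ← mul_assoc s⁻¹, nonsing_inv_mul s hs, one_mul, hJ]

theorem twistUnit_conjLinearEquiv_apply (hJ : J * J = 1) (hs : IsUnit s.det) (v : Matrix n n R) :
    (twistUnit hJ hs).conjLinearEquiv R v = s * (J * v * J) * s⁻¹ := by
  simp [twistUnit, mul_assoc]

theorem twistUnit_conjLinearEquiv_symm_apply (hJ : J * J = 1) (hs : IsUnit s.det)
    (v : Matrix n n R) :
    ((twistUnit hJ hs).conjLinearEquiv R).symm v = (J * s * J)⁻¹ * (J * v * J) * (J * s * J) := by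
  have hJinv : J⁻¹ = J := inv_eq_left_inv hJ
  simp only [Units.conjLinearEquiv_symm_apply, twistUnit, mul_inv_rev, hJinv, mul_assoc]
  simp [← mul_assoc, hJ]

theorem trace_units_conjLinearEquiv (g : (Matrix n n R)ˣ) (v : Matrix n n R) :
    (g.conjLinearEquiv R v).trace = v.trace :=
  trace_units_conj g v

end Matrix

theorem Pbiv_eq_half_sub {n : ℕ} {J s : Matrix (Fin n) (Fin n) ℝ} (hJ : J * J = 1)
    (hs : IsUnit s.det) (u : Matrix (Fin n) (Fin n) ℝ) :
    Pbiv J s u = (2 : ℝ)⁻¹ • (((Matrix.twistUnit hJ hs).conjLinearEquiv ℝ).symm u -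
      (Matrix.twistUnit hJ hs).conjLinearEquiv ℝ u) := by
  rw [Pbiv, Matrix.twistUnit_conjLinearEquiv_apply, Matrix.twistUnit_conjLinearEquiv_symm_apply]

theorem stmt_10_general (n : ℕ)
    (J s : Matrix (Fin n) (Fin n) ℝ)
    (hJ : J * J = 1) (hs : s.det = 1) :
    ({v | ∃ u : Matrix (Fin n) (Fin n) ℝ, u.trace = 0 ∧ Pbiv J s u = v}
        = {v | ∃ y : Matrix (Fin n) (Fin n) ℝ, y.trace = 0 ∧
            v = (y + s * (J * y * J) * s⁻¹)
              - s * (J * (y + s * (J * y * J) * s⁻¹) * J) * s⁻¹}) ∧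
    ({v | ∃ u : Matrix (Fin n) (Fin n) ℝ, u.trace = 0 ∧ Pbiv J s u = v}
        ⊆ {v | ∃ x : Matrix (Fin n) (Fin n) ℝ, x.trace = 0 ∧
            v = x - s * (J * x * J) * s⁻¹}) := by
  have hsu : IsUnit s.det := hs ▸ isUnit_one
  simp only [Pbiv_eq_half_sub hJ hsu, ← Matrix.twistUnit_conjLinearEquiv_apply hJ hsu]
  set A := (Matrix.twistUnit hJ hsu).conjLinearEquiv ℝ
  have key := Submodule.map_half_symm_sub_eq_map_one_sub_mul_one_add two_ne_zero A
    (LinearMap.ker (Matrix.traceLinearMap (Fin n) ℝ ℝ)) fun v => by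
      simp only [LinearMap.mem_ker, Matrix.traceLinearMap_apply, A,
        Matrix.trace_units_conjLinearEquiv]
  simp only [SetLike.ext_iff, Submodule.mem_map, LinearMap.mem_ker, Matrix.traceLinearMap_apply,
    LinearMap.smul_apply, LinearMap.sub_apply, Module.End.mul_apply, LinearMap.add_apply,
    Module.End.one_apply, LinearEquiv.coe_coe] at key
  refine ⟨Set.ext fun v => (key v).trans (exists_congr fun y => and_congr_right' eq_comm), ?_⟩
  intro v hv
  obtain ⟨y, hy, rfl⟩ := (key v).mp hv
  refine ⟨y + A y, ?_, rfl⟩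
  rw [Matrix.trace_add, Matrix.trace_units_conjLinearEquiv, hy, add_zero]

theorem stmt_10 (n : ℕ) (hn : 2 ≤ n)
    (J s : Matrix (Fin n) (Fin n) ℝ)
    (hJ : J * J = 1) (hs : s.det = 1) :
    ({v | ∃ u : Matrix (Fin n) (Fin n) ℝ, u.trace = 0 ∧ Pbiv J s u = v}
        = {v | ∃ y : Matrix (Fin n) (Fin n) ℝ, y.trace = 0 ∧
            v = (y + s * (J * y * J) * s⁻¹)
              - s * (J * (y + s * (J * y * J) * s⁻¹) * J) * s⁻¹}) ∧
    ({v | ∃ u : Matrix (Fin n) (Fin n) ℝ, u.trace = 0 ∧ Pbiv J s u = v}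
        ⊆ {v | ∃ x : Matrix (Fin n) (Fin n) ℝ, x.trace = 0 ∧
            v = x - s * (J * x * J) * s⁻¹}) :=
  stmt_10_general n J s hJ hs
end

section
/- For every s ∈ SL(2,ℝ) and all y, z ∈ sl(2,ℝ), with τ_s : sl(2,ℝ) → sl(2,ℝ) given by τ_s(v) = s H v H s⁻¹ − H s⁻¹ v s H: [y, τ_s(z)] + [τ_s(y), z] − τ_s([y,z]) = 0. (Since ½[P_S^σ, P_S^σ](K(x,·), K(y,·), K(z,·)) = ¼ K(x, [y,τ_s(z)] + [τ_s(y),z] − τ_s([y,z])) and K is nondegenerate, this says exactly that the Schouten bracket [P_S^σ, P_S^σ] vanishes, i.e. P_S^σ is a genuine Poisson bivector field on SL(2,ℝ).) -/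
/-!
Put `A = s * H`. Since `H⁻¹ = H`, the map is `τ_s(v) = A v A⁻¹ - A⁻¹ v A`, and `det A = -1`, so
Cayley–Hamilton for `2 × 2` matrices gives `A⁻¹ = A - tr(A) • 1`. Substituting, `τ_s` collapses to the
inner derivation `v ↦ ⁅-tr(A) • A, v⁆`, and the identity is its Leibniz rule.
-/

/-- H = [[1,0],[0,−1]]. -/
noncomputable def Hmat : Matrix (Fin 2) (Fin 2) ℝ := !![1, 0; 0, -1]

/-- τ_s(v) = s H v H s⁻¹ − H s⁻¹ v s H. -/
noncomputable def tau (s v : Matrix (Fin 2) (Fin 2) ℝ) : Matrix (Fin 2) (Fin 2) ℝ :=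
  s * Hmat * v * Hmat * s⁻¹ - Hmat * s⁻¹ * v * s * Hmat

namespace Matrix

variable {R : Type*} [CommRing R]

theorem adjugate_fin_two_eq_trace_smul_one_sub (A : Matrix (Fin 2) (Fin 2) R) :
    A.adjugate = A.trace • 1 - A := by
  ext i j
  fin_cases i <;> fin_cases j <;> simp [adjugate_fin_two, trace_fin_two]

theorem inv_eq_sub_trace_smul_one_of_det_eq_neg_one {A : Matrix (Fin 2) (Fin 2) R}
    (hA : A.det = -1) : A⁻¹ = A - A.trace • 1 := by
  rw [inv_eq_left_inv (B := -A.adjugate) (by simp [adjugate_mul, hA]),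
    adjugate_fin_two_eq_trace_smul_one_sub]
  abel

end Matrix

theorem mul_mul_sub_mul_mul_eq_lie_of_eq_sub_smul_one {K A : Type*} [CommRing K] [Ring A]
    [Algebra K A] {a b : A} {t : K} (hb : b = a - t • 1) (v : A) :
    a * v * b - b * v * a = ⁅-t • a, v⁆ := by
  subst hb
  simp only [Ring.lie_def, mul_sub, sub_mul, smul_mul_assoc, mul_smul_comm, mul_one, one_mul,
    neg_smul, neg_mul, mul_neg]
  abel

theorem Hmat_mul_self : Hmat * Hmat = 1 := by
  ext i j
  fin_cases i <;> fin_cases j <;> simp [Hmat]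

theorem det_Hmat : Hmat.det = -1 := by
  simp [Hmat, Matrix.det_fin_two_of]

section

-- Matrices carry no global `LieRing` instance; this one's bracket is the ring commutator of the statement.
attribute [local instance 100] LieRing.ofAssociativeRing

theorem tau_eq_ad {s : Matrix (Fin 2) (Fin 2) ℝ} (hs : s.det = 1) :
    tau s = LieDerivation.ad ℝ (Matrix (Fin 2) (Fin 2) ℝ) (-(s * Hmat).trace • (s * Hmat)) := by
  have hinv : (s * Hmat)⁻¹ = Hmat * s⁻¹ := by
    rw [Matrix.mul_inv_rev, Matrix.inv_eq_left_inv Hmat_mul_self]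
  have hdet : (s * Hmat).det = -1 := by
    rw [Matrix.det_mul, hs, det_Hmat, one_mul]
  ext1 v
  rw [LieDerivation.ad_apply_apply, ← mul_mul_sub_mul_mul_eq_lie_of_eq_sub_smul_one
    (Matrix.inv_eq_sub_trace_smul_one_of_det_eq_neg_one hdet), hinv, tau]
  simp only [Matrix.mul_assoc]

theorem tau_lie {s : Matrix (Fin 2) (Fin 2) ℝ} (hs : s.det = 1) (y z : Matrix (Fin 2) (Fin 2) ℝ) :
    tau s ⁅y, z⁆ = ⁅y, tau s z⁆ + ⁅tau s y, z⁆ := by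
  rw [tau_eq_ad hs]
  exact LieDerivation.apply_lie_eq_add _ y z

end

theorem stmt_11_general (s y z : Matrix (Fin 2) (Fin 2) ℝ)
    (hs : s.det = 1) :
    ⁅y, tau s z⁆ + ⁅tau s y, z⁆ - tau s ⁅y, z⁆ = 0 := by
  rw [tau_lie hs, sub_self]

theorem stmt_11 (s y z : Matrix (Fin 2) (Fin 2) ℝ)
    (hs : s.det = 1) (hy : y.trace = 0) (hz : z.trace = 0) :
    ⁅y, tau s z⁆ + ⁅tau s y, z⁆ - tau s ⁅y, z⁆ = 0 :=
  stmt_11_general s y z hs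
end

section
/- For every z ∈ I and every nonzero integer n, conjugation by exp(nπH) = diag(e^{nπ}, e^{−nπ}) moves z: diag(e^{nπ}, e^{−nπ}) · z · diag(e^{−nπ}, e^{nπ}) ≠ z. (Since σ fixes each element of F = {exp(nπH) : n ∈ ℤ} and the twisted action of F on I reduces to conjugation, this says the action of F on the open set I is free, so that the quotient F\I — the massive non-rotating BTZ black hole — is a smooth manifold.) -/
open Real Matrix

lemma conj_diag_exp_apply_zero_one (t : ℝ) (z : Matrix (Fin 2) (Fin 2) ℝ) :
    (!![exp t, 0; 0, exp (-t)] * z * !![exp (-t), 0; 0, exp t]) 0 1 = exp (2 * t) * z 0 1 := by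
  simp only [mul_apply, Fin.sum_univ_two, of_apply, cons_val', cons_val_zero, cons_val_one,
    empty_val', cons_val_fin_one]
  rw [two_mul, exp_add]
  ring

lemma conj_diag_exp_ne_self {t : ℝ} (ht : t ≠ 0) {z : Matrix (Fin 2) (Fin 2) ℝ}
    (hz : z 0 1 ≠ 0) :
    !![exp t, 0; 0, exp (-t)] * z * !![exp (-t), 0; 0, exp t] ≠ z := by
  intro h
  have hscale : exp (2 * t) * z 0 1 = 1 * z 0 1 := by
    rw [← conj_diag_exp_apply_zero_one, h, one_mul]
  have hexp : exp (2 * t) = 1 := mul_right_cancel₀ hz hscale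
  rw [exp_eq_one_iff] at hexp
  exact ht (by linarith)

theorem stmt_14_general (z : Matrix (Fin 2) (Fin 2) ℝ)
    (hI : z 0 1 * z 1 0 < 0)
    (n : ℤ) (hn : n ≠ 0) :
    !![Real.exp ((n : ℝ) * Real.pi), 0; 0, Real.exp (-((n : ℝ) * Real.pi))] * z *
        !![Real.exp (-((n : ℝ) * Real.pi)), 0; 0, Real.exp ((n : ℝ) * Real.pi)]
      ≠ z :=
  conj_diag_exp_ne_self (mul_ne_zero (Int.cast_ne_zero.mpr hn) pi_ne_zero)
    (left_ne_zero_of_mul hI.ne)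

theorem stmt_14 (z : Matrix (Fin 2) (Fin 2) ℝ)
    (hz : z.det = 1) (hI : z 0 1 * z 1 0 < 0)
    (n : ℤ) (hn : n ≠ 0) :
    !![Real.exp ((n : ℝ) * Real.pi), 0; 0, Real.exp (-((n : ℝ) * Real.pi))] * z *
        !![Real.exp (-((n : ℝ) * Real.pi)), 0; 0, Real.exp ((n : ℝ) * Real.pi)]
      ≠ z :=
  stmt_14_general z hI n hn
end
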